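/- arXiv:1006.0735 — 2 statements merged into one kernel-verified Lean document; each statement's English description precedes it below -/
import Mathlib

section
/- Let β ≠ 0 and θ be real numbers, set F = e(θ) and Q(x) = 1 + F e(βx). Let n′ be an integer, and define m := ⌊−2θ/β + n′/β⌋ and γ := {−2θ/β + n′/β}. Then for every integer L ≥ 1 and every x ∈ ℝ, ∏_{n=−L}^{−1} |Q(γ − x + n)| = ∏_{n=m+1}^{L+m} |Q(x + n)|. -/
open Finset

/-- `e t = e^{2πit}`. -/
noncomputable def e (t : ℝ) : ℂ := Complex.exp (2 * Real.pi * Complex.I * t)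

lemma e_mul (s t : ℝ) : e (s + t) = e s * e t := by
  simp [e, mul_add, Complex.exp_add]

lemma e_int (k : ℤ) : e k = 1 := by
  have : (2 * Real.pi * Complex.I * (k : ℝ) : ℂ) = (k : ℤ) * (2 * Real.pi * Complex.I) := by
    push_cast; ring
  rw [e, this, Complex.exp_int_mul_two_pi_mul_I]

lemma e_conj (t : ℝ) : (starRingEnd ℂ) (e t) = e (-t) := by
  rw [e, e, ← Complex.exp_conj]
  congr 1
  simp [Complex.ext_iff]

lemma abs_one_add_e (t : ℝ) : ‖1 + e t‖ = ‖1 + e (-t)‖ := by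
  rw [← Complex.norm_conj (1 + e t), map_add, e_conj, map_one]

theorem conjugates_trick_product_identity
    (β θ : ℝ) (hβ : β ≠ 0) (n' : ℤ)
    (F : ℂ) (hF : F = e θ)
    (Q : ℝ → ℂ) (hQ : ∀ x, Q x = 1 + F * e (β * x))
    (m : ℤ) (hm : m = ⌊-(2*θ)/β + (n' : ℝ)/β⌋)
    (γ : ℝ) (hγ : γ = Int.fract (-(2*θ)/β + (n' : ℝ)/β)) :
    ∀ L : ℤ, 1 ≤ L → ∀ x : ℝ,
      ∏ n ∈ Finset.Icc (-L) (-1), ‖Q (γ - x + n)‖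
        = ∏ n ∈ Finset.Icc (m+1) (L+m), ‖Q (x + n)‖ := by
  intro L _ x
  have hQe : ∀ t : ℝ, Q t = 1 + e (θ + β * t) := by
    intro t
    rw [hQ, hF, ← e_mul]
  -- key pointwise identity
  have key : ∀ n : ℤ, ‖Q (γ - x + n)‖ = ‖Q (x + (m - n : ℤ))‖ := by
    intro n
    rw [hQe, hQe, abs_one_add_e]
    congr 2
    have hγ' : β * γ = -(2*θ) + n' - β * m := by
      rw [hγ, hm, Int.fract]
      field_simp
    have : -(θ + β * (γ - x + n)) = (θ + β * (x + (m - n : ℤ))) + (-n' : ℤ) := by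
      push_cast
      push_cast at hγ'
      linear_combination -hγ'
    rw [this, e_mul, e_int, mul_one]
  calc ∏ n ∈ Finset.Icc (-L) (-1), ‖Q (γ - x + n)‖
      = ∏ n ∈ Finset.Icc (-L) (-1), ‖Q (x + (m - n : ℤ))‖ := by
        exact Finset.prod_congr rfl fun n _ => key n
    _ = ∏ n ∈ Finset.Icc (m+1) (L+m), ‖Q (x + n)‖ := by
        apply Finset.prod_nbij' (fun n => m - n) (fun n => m - n)
        · intro a ha
          simp only [Finset.mem_Icc] at ha ⊢
          omega
        · intro a ha
          simp only [Finset.mem_Icc] at ha ⊢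
          omega
        · intro a _; omega
        · intro a _; omega
        · intro a _; simp
end

section
/- There is an absolute constant C such that for every positive integer M, every integer c, every real number u, and every real number P > M^{3/2}, one has |∑_{j ∈ ℤ, M^{3/2} < |j| ≤ P} {u + cj/M} / j| ≤ C · M^{−1/2}. -/
open Finset

-- shifting a full-period window over ℤ
lemma period_window (f : ℤ → ℝ) (M : ℕ) (hf : ∀ j : ℤ, f (j + M) = f j) (B : ℤ) :
    ∑ i ∈ range M, f (B + i) = ∑ i ∈ range M, f i := by
  induction B using Int.induction_on with
  | zero => simp
  | succ B ih =>
      have h1 : ∑ i ∈ range (M + 1), f (B + i) = (∑ i ∈ range M, f (B + (i+1))) + f (B + 0) :=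
        Finset.sum_range_succ' _ _
      have h2 : ∑ i ∈ range (M + 1), f (B + i) = (∑ i ∈ range M, f (B + i)) + f (B + M) :=
        Finset.sum_range_succ _ _
      have h3 : ∀ i : ℕ, f (B + (i+1)) = f ((B+1) + i) := by intro i; push_cast; ring_nf
      rw [Finset.sum_congr rfl (fun i _ => h3 i)] at h1
      have h4 : f (B + M) = f B := hf B
      have : ∑ i ∈ range M, f ((B+1) + i) = ∑ i ∈ range M, f (B + i) := by
        have := h1.symm.trans h2
        simp only [add_zero] at this
        rw [h4] at this
        linarith
      rw [this, ih]
  | pred B ih =>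
      have h1 : ∑ i ∈ range (M + 1), f ((-B-1) + i) = (∑ i ∈ range M, f ((-B-1) + (i+1))) + f ((-B-1) + 0) :=
        Finset.sum_range_succ' _ _
      have h2 : ∑ i ∈ range (M + 1), f ((-B-1) + i) = (∑ i ∈ range M, f ((-B-1) + i)) + f ((-B-1) + M) :=
        Finset.sum_range_succ _ _
      have h3 : ∀ i : ℕ, f ((-B-1) + (i+1)) = f ((-B) + i) := by intro i; push_cast; ring_nf
      rw [Finset.sum_congr rfl (fun i _ => h3 i)] at h1
      have h4 : f ((-B-1) + M) = f (-B-1) := by have := hf (-B-1); simpa using this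
      have key : ∑ i ∈ range M, f ((-B) + i) = ∑ i ∈ range M, f ((-B-1) + i) := by
        have := h1.symm.trans h2
        simp only [add_zero] at this
        rw [h4] at this
        linarith
      have : ∑ i ∈ range M, f ((-(B:ℤ)-1) + i) = ∑ i ∈ range M, f i := by
        rw [← key]; exact ih
      simpa [sub_eq_add_neg, add_comm] using this

lemma period_reflect (f : ℤ → ℝ) (M : ℕ) (hf : ∀ j : ℤ, f (j + M) = f j) :
    ∑ i ∈ range M, f (-(i:ℤ)) = ∑ i ∈ range M, f i := by
  have h0 : ∑ i ∈ range M, f (-(i:ℤ)) = ∑ i ∈ range M, f (-((M - 1 - i : ℕ) : ℤ)) :=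
    (Finset.sum_range_reflect (fun i => f (-(i:ℤ))) M).symm
  have h1 : ∑ i ∈ range M, f (-((M - 1 - i : ℕ) : ℤ)) = ∑ i ∈ range M, f ((1:ℤ) + i) := by
    apply Finset.sum_congr rfl
    intro i hi
    have hiM : i < M := Finset.mem_range.mp hi
    have hcast : ((M - 1 - i : ℕ) : ℤ) = (M : ℤ) - 1 - i := by omega
    rw [hcast]
    have : (1:ℤ) + i = (-(((M:ℤ) - 1 - i))) + M := by ring
    rw [this, hf]
  rw [h0, h1, period_window f M hf 1]

lemma partial_sum_bound (M : ℕ) (hM : 0 < M) (g : ℕ → ℝ) (hg : ∀ i, |g i| ≤ 1)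
    (hblock : ∀ t : ℕ, ∑ i ∈ Ico t (t + M), g i = 0) :
    ∀ k, |∑ i ∈ range k, g i| ≤ M := by
  intro k
  induction k using Nat.strong_induction_on with
  | _ k ih =>
    by_cases hk : k < M
    · calc |∑ i ∈ range k, g i| ≤ ∑ i ∈ range k, |g i| := Finset.abs_sum_le_sum_abs _ _
        _ ≤ ∑ _i ∈ range k, (1:ℝ) := Finset.sum_le_sum (fun i _ => hg i)
        _ = k := by simp
        _ ≤ M := by exact_mod_cast hk.le
    · push_neg at hk
      have hsplit : ∑ i ∈ range k, g i = (∑ i ∈ range (k - M), g i) + ∑ i ∈ Ico (k - M) k, g i := by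
        rw [range_eq_Ico, range_eq_Ico]
        exact (Finset.sum_Ico_consecutive g (Nat.zero_le _) (Nat.sub_le k M)).symm
      have hI : Ico (k - M) k = Ico (k - M) ((k - M) + M) := by
        rw [Nat.sub_add_cancel hk]
      have hz : ∑ i ∈ Ico (k - M) k, g i = 0 := by rw [hI]; exact hblock (k - M)
      rw [hsplit, hz, add_zero]
      exact ih (k - M) (by omega)

lemma abel_bound (a : ℤ) (ha : 1 ≤ a) (M : ℕ) (hM : 0 < M) (g : ℕ → ℝ) (hg : ∀ i, |g i| ≤ 1)
    (hblock : ∀ t : ℕ, ∑ i ∈ Ico t (t + M), g i = 0) (n : ℕ) :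
    |∑ i ∈ range n, g i / ((a:ℝ) + i)| ≤ (M:ℝ) / a := by
  have ha0 : (0:ℝ) < (a:ℝ) := by exact_mod_cast ha.trans_lt' (by norm_num)
  have haR : (1:ℝ) ≤ (a:ℝ) := by exact_mod_cast ha
  have hMa : (0:ℝ) ≤ (M:ℝ) / a := div_nonneg (by positivity) ha0.le
  rcases Nat.eq_zero_or_pos n with hn | hn
  · subst hn; simpa using hMa
  have hpos : ∀ i : ℕ, (0:ℝ) < (a:ℝ) + i := fun i => by positivity
  have hG := partial_sum_bound M hM g hg hblock
  set F : ℕ → ℝ := fun i => ((a:ℝ) + i)⁻¹ with hF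
  have key : ∑ i ∈ range n, g i / ((a:ℝ) + i) = ∑ i ∈ range n, F i • g i := by
    apply Finset.sum_congr rfl; intro i _; rw [smul_eq_mul, hF]; ring
  rw [key, Finset.sum_range_by_parts F g n]
  have habs : |F (n-1) • (∑ i ∈ range n, g i)| ≤ F (n-1) * M := by
    rw [smul_eq_mul, abs_mul, abs_of_pos (show (0:ℝ) < F (n-1) by positivity)]
    exact mul_le_mul_of_nonneg_left (hG n) (by positivity)
  have hterm : ∀ i ∈ range (n-1), |(F (i+1) - F i) • (∑ j ∈ range (i+1), g j)| ≤ (F i - F (i+1)) * M := by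
    intro i _
    rw [smul_eq_mul, abs_mul]
    have hmono : F (i+1) ≤ F i := by
      apply inv_anti₀ (hpos i)
      push_cast; linarith
    rw [abs_of_nonpos (by linarith), neg_sub]
    exact mul_le_mul (le_refl _) (hG (i+1)) (abs_nonneg _) (by linarith)
  calc |F (n-1) • (∑ i ∈ range n, g i) - ∑ i ∈ range (n-1), (F (i+1) - F i) • (∑ j ∈ range (i+1), g j)|
      ≤ |F (n-1) • (∑ i ∈ range n, g i)| + |∑ i ∈ range (n-1), (F (i+1) - F i) • (∑ j ∈ range (i+1), g j)| := abs_sub _ _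
    _ ≤ F (n-1) * M + ∑ i ∈ range (n-1), |(F (i+1) - F i) • (∑ j ∈ range (i+1), g j)| := by
        exact add_le_add habs (Finset.abs_sum_le_sum_abs _ _)
    _ ≤ F (n-1) * M + ∑ i ∈ range (n-1), (F i - F (i+1)) * M := by
        gcongr with i hi
        exact hterm i hi
    _ = F (n-1) * M + (F 0 - F (n-1)) * M := by
        rw [← Finset.sum_mul, Finset.sum_range_sub' F (n-1)]
    _ = F 0 * M := by ring
    _ = (M:ℝ) / a := by rw [hF]; simp; ring


theorem sum_fract_over_j_bound :
    ∃ C : ℝ, ∀ M : ℕ, 0 < M → ∀ c : ℤ, ∀ u : ℝ, ∀ P : ℝ, (M : ℝ) ^ ((3:ℝ)/2) < P →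
      |∑ j ∈ (Finset.Icc ⌈-P⌉ ⌊P⌋).filter
          (fun j : ℤ => (M : ℝ) ^ ((3:ℝ)/2) < |(j : ℝ)|),
        Int.fract (u + (c : ℝ) * (j : ℝ) / (M : ℝ)) / (j : ℝ)| ≤ C * (M : ℝ) ^ (-(1:ℝ)/2) := by
  refine ⟨1, fun M hM c u P hP => ?_⟩
  have hM0 : (0:ℝ) < (M:ℝ) := by exact_mod_cast hM
  set x : ℝ := (M:ℝ) ^ ((3:ℝ)/2) with hx
  have hx0 : (0:ℝ) < x := Real.rpow_pos_of_pos hM0 _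
  set f : ℤ → ℝ := fun j => Int.fract (u + (c:ℝ) * (j:ℝ) / (M:ℝ)) with hfdef
  have hfper : ∀ j : ℤ, f (j + M) = f j := by
    intro j
    show Int.fract (u + (c:ℝ) * ((j:ℤ) + (M:ℕ) : ℤ) / (M:ℝ)) = _
    have : (u + (c:ℝ) * (((j:ℤ) + (M:ℕ) : ℤ):ℝ) / (M:ℝ)) = (u + (c:ℝ) * (j:ℝ) / (M:ℝ)) + (c:ℤ) := by
      push_cast
      field_simp
      ring
    rw [this, Int.fract_add_intCast]
  set A : ℤ := ⌊x⌋ + 1 with hA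
  set K : ℤ := ⌊P⌋ with hK
  have hA1 : 1 ≤ A := by
    have : (0:ℤ) ≤ ⌊x⌋ := Int.floor_nonneg.mpr hx0.le
    omega
  have hAx : x < (A:ℝ) := by
    rw [hA]
    push_cast
    exact Int.lt_floor_add_one x
  -- set equality
  have hcond : ∀ j : ℤ, (x < |(j:ℝ)|) ↔ A ≤ |j| := by
    intro j
    rw [← Int.cast_abs, ← Int.floor_lt]
    omega
  have hset : (Finset.Icc ⌈-P⌉ ⌊P⌋).filter (fun j : ℤ => x < |(j:ℝ)|)
      = Finset.Icc A K ∪ (Finset.Icc A K).image (fun j => -j) := by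
    ext j
    simp only [Finset.mem_filter, Finset.mem_Icc, Finset.mem_union, Finset.mem_image,
      Int.ceil_neg, hcond j]
    constructor
    · rintro ⟨⟨h1, h2⟩, h3⟩
      rcases le_abs.mp h3 with h | h
      · exact Or.inl ⟨h, h2⟩
      · exact Or.inr ⟨-j, ⟨h, by omega⟩, by ring⟩
    · rintro (⟨h1, h2⟩ | ⟨b, ⟨hb1, hb2⟩, rfl⟩)
      · refine ⟨⟨by omega, h2⟩, ?_⟩
        rw [le_abs]; left; exact h1
      · refine ⟨⟨by omega, by omega⟩, ?_⟩
        rw [le_abs]; right; omega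
  have hdisj : Disjoint (Finset.Icc A K) ((Finset.Icc A K).image (fun j => -j)) := by
    rw [Finset.disjoint_left]
    rintro j hj hj'
    simp only [Finset.mem_Icc] at hj
    simp only [Finset.mem_image, Finset.mem_Icc] at hj'
    obtain ⟨b, ⟨hb1, _⟩, rfl⟩ := hj'
    omega
  rw [hset, Finset.sum_union hdisj,
    Finset.sum_image (by intro a _ b _ h; have h' : -a = -b := h; omega)]
  have hcomb : (∑ j ∈ Finset.Icc A K, f j / (j:ℝ))
      + ∑ j ∈ Finset.Icc A K, f (-j) / (((-j : ℤ)):ℝ)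
      = ∑ j ∈ Finset.Icc A K, (f j - f (-j)) / (j:ℝ) := by
    rw [← Finset.sum_add_distrib]
    apply Finset.sum_congr rfl
    intro j hj
    have hj0 : (j:ℝ) ≠ 0 := by
      simp only [Finset.mem_Icc] at hj
      exact_mod_cast (by omega : j ≠ 0)
    have hcast : ((-j : ℤ):ℝ) = -(j:ℝ) := by push_cast; ring
    rw [hcast, div_neg, sub_div]
    ring
  rw [show (∑ j ∈ Finset.Icc A K, f (-j) / ((-j : ℤ):ℝ)) = ∑ j ∈ Finset.Icc A K, f (-j) / (((-j:ℤ)):ℝ) from rfl] at hcomb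
  rw [hcomb]
  -- reindex
  set n : ℕ := (K + 1 - A).toNat with hn
  set g : ℕ → ℝ := fun i => f (A + i) - f (-(A + i)) with hgdef
  have hrein : ∑ j ∈ Finset.Icc A K, (f j - f (-j)) / (j:ℝ)
      = ∑ i ∈ range n, g i / ((A:ℝ) + i) := by
    refine Finset.sum_nbij' (fun j => (j - A).toNat) (fun i => A + i) ?_ ?_ ?_ ?_ ?_
    · intro j hj; simp only [Finset.mem_Icc] at hj; simp only [Finset.mem_range]; omega
    · intro i hi; simp only [Finset.mem_range] at hi; simp only [Finset.mem_Icc]; omega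
    · intro j hj
      simp only [Finset.mem_Icc] at hj
      show A + (((j - A).toNat : ℕ) : ℤ) = j
      omega
    · intro i hi
      simp only [Finset.mem_range] at hi
      show ((A + (i:ℤ)) - A).toNat = i
      omega
    · intro j hj
      simp only [Finset.mem_Icc] at hj
      have h1 : (A + ((j - A).toNat : ℤ)) = j := by omega
      have h2 : ((A:ℝ) + ((j - A).toNat : ℕ)) = (j:ℝ) := by
        exact_mod_cast congrArg (Int.cast : ℤ → ℝ) h1
      rw [hgdef]
      simp only [h1, h2]
  rw [hrein]
  -- bounds for g
  have hgbd : ∀ i, |g i| ≤ 1 := by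
    intro i
    rw [hgdef, abs_le]
    constructor <;>
    · have a1 := Int.fract_nonneg (u + (c:ℝ) * ((A + i : ℤ):ℝ) / (M:ℝ))
      have a2 := Int.fract_lt_one (u + (c:ℝ) * ((A + i : ℤ):ℝ) / (M:ℝ))
      have b1 := Int.fract_nonneg (u + (c:ℝ) * ((-(A + i) : ℤ):ℝ) / (M:ℝ))
      have b2 := Int.fract_lt_one (u + (c:ℝ) * ((-(A + i) : ℤ):ℝ) / (M:ℝ))
      simp only [hfdef]
      linarith
  -- block sums vanish
  have hfnegper : ∀ j : ℤ, (fun t => f (-t)) (j + M) = (fun t => f (-t)) j := by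
    intro j
    simp only []
    have : -(j + (M:ℤ)) = (-j - M) := by ring
    rw [this]
    have := hfper (-j - M)
    simpa using this.symm
  have hwindow : ∀ (h : ℤ → ℝ), (∀ j : ℤ, h (j + M) = h j) → ∀ t : ℕ,
      ∑ i ∈ Ico t (t + M), h (A + i) = ∑ i ∈ range M, h i := by
    intro h hh t
    rw [Finset.sum_Ico_eq_sum_range]
    simp only [Nat.add_sub_cancel_left]
    have : ∀ i ∈ range M, h (A + (t + i : ℕ)) = h ((A + t) + i) := by
      intro i _; congr 1; push_cast; ring
    rw [Finset.sum_congr rfl this]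
    exact period_window h M hh (A + t)
  have hblock : ∀ t : ℕ, ∑ i ∈ Ico t (t + M), g i = 0 := by
    intro t
    rw [hgdef]
    rw [Finset.sum_sub_distrib]
    rw [hwindow f hfper t, hwindow (fun t => f (-t)) hfnegper t]
    rw [period_reflect f M hfper]
    ring
  have hmain := abel_bound A hA1 M hM g hgbd hblock n
  refine hmain.trans ?_
  -- final numeric bound
  have h1 : (M:ℝ) / (A:ℝ) ≤ (M:ℝ) / x := by
    apply div_le_div_of_nonneg_left hM0.le hx0 hAx.le
  refine h1.trans ?_
  have h2 : (M:ℝ) / x = (M:ℝ) ^ ((1:ℝ) - (3:ℝ)/2) := by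
    rw [Real.rpow_sub hM0, Real.rpow_one]
  rw [h2, one_mul]
  norm_num
end
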